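/- For the (2,4,2) nilradical m ⊂ gl(8,K) with N the unitriangular group acting by conjugation, the polynomial D on m given by D(X) = (X²)_{1,7}(X²)_{2,8} − (X²)_{1,8}(X²)_{2,7} is N-invariant: D(g⁻¹ X g) = D(X) for all g ∈ N, X ∈ m. -/
import Mathlib


noncomputable section

open Matrix

variable {K : Type*} [Field K] [CharZero K]

/-- membership in the (2,4,2) nilradical of gl(8,K) (indices 0-based):
entries vanish outside rows 1-2 × cols 3-8 and rows 3-6 × cols 7-8 (1-based). -/
def InNil242 (Y : Matrix (Fin 8) (Fin 8) K) : Prop :=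
  ∀ i j : Fin 8,
    ¬ ((i.val < 2 ∧ 2 ≤ j.val) ∨ (2 ≤ i.val ∧ i.val < 6 ∧ 6 ≤ j.val)) → Y i j = 0

/-- upper unitriangular matrices. -/
def IsUnitriangular {n : ℕ} (g : Matrix (Fin n) (Fin n) K) : Prop :=
  (∀ i, g i i = 1) ∧ ∀ i j : Fin n, j < i → g i j = 0

def fM1 (Y : Matrix (Fin 8) (Fin 8) K) : K := Y 1 2
def fM2 (Y : Matrix (Fin 8) (Fin 8) K) : K := Y 0 2 * Y 1 3 - Y 0 3 * Y 1 2
def fN1 (Y : Matrix (Fin 8) (Fin 8) K) : K := Y 5 6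
def fN2 (Y : Matrix (Fin 8) (Fin 8) K) : K := Y 4 6 * Y 5 7 - Y 4 7 * Y 5 6
def fL11 (Y : Matrix (Fin 8) (Fin 8) K) : K :=
  Y 1 2 * Y 2 6 + Y 1 3 * Y 3 6 + Y 1 4 * Y 4 6 + Y 1 5 * Y 5 6
def fL12 (Y : Matrix (Fin 8) (Fin 8) K) : K :=
  (Y 0 2 * Y 1 3 - Y 0 3 * Y 1 2) * Y 3 6 +
  (Y 0 2 * Y 1 4 - Y 0 4 * Y 1 2) * Y 4 6 +
  (Y 0 2 * Y 1 5 - Y 0 5 * Y 1 2) * Y 5 6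
def fL21 (Y : Matrix (Fin 8) (Fin 8) K) : K :=
  Y 1 2 * (Y 2 6 * Y 5 7 - Y 2 7 * Y 5 6) +
  Y 1 3 * (Y 3 6 * Y 5 7 - Y 3 7 * Y 5 6) +
  Y 1 4 * (Y 4 6 * Y 5 7 - Y 4 7 * Y 5 6)
def fL22 (Y : Matrix (Fin 8) (Fin 8) K) : K :=
  (Y 0 2 * Y 1 3 - Y 0 3 * Y 1 2) * (Y 3 6 * Y 5 7 - Y 3 7 * Y 5 6) +
  (Y 0 2 * Y 1 4 - Y 0 4 * Y 1 2) * (Y 4 6 * Y 5 7 - Y 4 7 * Y 5 6)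
def fD (Y : Matrix (Fin 8) (Fin 8) K) : K :=
  (Y * Y) 0 6 * (Y * Y) 1 7 - (Y * Y) 0 7 * (Y * Y) 1 6

/-- D(X) = (X²)₁₇(X²)₂₈ − (X²)₁₈(X²)₂₇ is N-invariant. -/
theorem D_N_invariant (g Y : Matrix (Fin 8) (Fin 8) K)
    (hg : IsUnitriangular g) (hY : InNil242 Y) :
    fD (g⁻¹ * Y * g) = fD Y := by
  obtain ⟨hg1, hg2⟩ := hg
  -- g has determinant 1
  have hdet : g.det = 1 := by
    rw [Matrix.det_of_upperTriangular (fun i j h => hg2 i j h)]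
    simp [hg1]
  have hu : IsUnit g.det := by rw [hdet]; exact isUnit_one
  have hgh : g * g⁻¹ = 1 := Matrix.mul_nonsing_inv g hu
  have hhg : g⁻¹ * g = 1 := Matrix.nonsing_inv_mul g hu
  set h := g⁻¹ with hh
  -- support of Y²
  have hB : ∀ i j : Fin 8, ¬ (i.val < 2 ∧ 6 ≤ j.val) → (Y * Y) i j = 0 := by
    intro i j hij
    rw [Matrix.mul_apply]
    apply Finset.sum_eq_zero
    intro k _
    by_cases h1 : (i.val < 2 ∧ 2 ≤ k.val) ∨ (2 ≤ i.val ∧ i.val < 6 ∧ 6 ≤ k.val)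
    · have : Y k j = 0 := by
        apply hY; rcases h1 with ⟨hi, hk⟩ | ⟨_, _, hk⟩ <;> push_neg at hij ⊢ <;> omega
      rw [this, mul_zero]
    · rw [hY i k h1, zero_mul]
  -- extract needed entries of h = g⁻¹ from h * g = 1
  have e : ∀ a b : Fin 8, (h * g) a b = (1 : Matrix (Fin 8) (Fin 8) K) a b := fun a b => by
    rw [hhg]
  have z10 : g 1 0 = 0 := hg2 1 0 (by decide)
  have z20 : g 2 0 = 0 := hg2 2 0 (by decide)
  have z30 : g 3 0 = 0 := hg2 3 0 (by decide)
  have z40 : g 4 0 = 0 := hg2 4 0 (by decide)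
  have z50 : g 5 0 = 0 := hg2 5 0 (by decide)
  have z60 : g 6 0 = 0 := hg2 6 0 (by decide)
  have z70 : g 7 0 = 0 := hg2 7 0 (by decide)
  have z21 : g 2 1 = 0 := hg2 2 1 (by decide)
  have z31 : g 3 1 = 0 := hg2 3 1 (by decide)
  have z41 : g 4 1 = 0 := hg2 4 1 (by decide)
  have z51 : g 5 1 = 0 := hg2 5 1 (by decide)
  have z61 : g 6 1 = 0 := hg2 6 1 (by decide)
  have z71 : g 7 1 = 0 := hg2 7 1 (by decide)
  have z76 : g 7 6 = 0 := hg2 7 6 (by decide)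
  have d0 : g 0 0 = 1 := hg1 0
  have d1 : g 1 1 = 1 := hg1 1
  have d6 : g 6 6 = 1 := hg1 6
  have d7 : g 7 7 = 1 := hg1 7
  have h00 : h 0 0 = 1 := by
    have := e 0 0
    simp only [Matrix.mul_apply, Fin.sum_univ_eight, Matrix.one_apply_eq,
      z10, z20, z30, z40, z50, z60, z70, d0, mul_zero, mul_one, add_zero] at this
    exact this
  have h10 : h 1 0 = 0 := by
    have := e 1 0
    simp only [Matrix.mul_apply, Fin.sum_univ_eight,
      z10, z20, z30, z40, z50, z60, z70, d0, mul_zero, mul_one, add_zero] at this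
    rw [this]; simp [Matrix.one_apply]
  have h11 : h 1 1 = 1 := by
    have := e 1 1
    simp only [Matrix.mul_apply, Fin.sum_univ_eight, Matrix.one_apply_eq,
      z21, z31, z41, z51, z61, z71, d1, h10, mul_zero, mul_one, add_zero, zero_mul, zero_add] at this
    exact this
  have h01 : h 0 1 = -(g 0 1) := by
    have := e 0 1
    simp only [Matrix.mul_apply, Fin.sum_univ_eight,
      z21, z31, z41, z51, z61, z71, d1, h00, mul_zero, mul_one, add_zero, one_mul] at this
    have h2 : (1 : Matrix (Fin 8) (Fin 8) K) 0 1 = 0 := by simp [Matrix.one_apply]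
    rw [h2] at this
    linear_combination this
  -- (g⁻¹ Y g)² = g⁻¹ Y² g
  have key : (h * Y * g) * (h * Y * g) = h * (Y * Y) * g := by
    calc (h * Y * g) * (h * Y * g) = h * Y * (g * h) * Y * g := by
          simp only [Matrix.mul_assoc]
      _ = h * (Y * Y) * g := by rw [hgh, Matrix.mul_one]; simp [Matrix.mul_assoc]
  -- compute the four entries of h * Y² * g at rows 0,1 cols 6,7
  have hent : ∀ (a b : Fin 8), a.val < 2 → 6 ≤ b.val →
      (h * (Y * Y) * g) a b =
        (h a 0 * (Y*Y) 0 6 + h a 1 * (Y*Y) 1 6) * g 6 b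
        + (h a 0 * (Y*Y) 0 7 + h a 1 * (Y*Y) 1 7) * g 7 b := by
    intro a b ha hb
    rw [Matrix.mul_apply]
    rw [Fin.sum_univ_eight]
    have hmid : ∀ j : Fin 8, (h * (Y * Y)) a j =
        h a 0 * (Y*Y) 0 j + h a 1 * (Y*Y) 1 j := by
      intro j
      rw [Matrix.mul_apply, Fin.sum_univ_eight]
      rw [hB 2 j (by omega), hB 3 j (by omega), hB 4 j (by omega), hB 5 j (by omega),
        hB 6 j (by omega), hB 7 j (by omega)]
      ring
    have hmz : ∀ j : Fin 8, j.val < 6 → (h * (Y * Y)) a j = 0 := by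
      intro j hj
      rw [hmid j, hB 0 j (by omega), hB 1 j (by omega)]
      ring
    rw [hmz 0 (by decide), hmz 1 (by decide), hmz 2 (by decide), hmz 3 (by decide),
      hmz 4 (by decide), hmz 5 (by decide), hmid 6, hmid 7]
    ring
  have m06 := hent 0 6 (by decide) (by decide)
  have m07 := hent 0 7 (by decide) (by decide)
  have m16 := hent 1 6 (by decide) (by decide)
  have m17 := hent 1 7 (by decide) (by decide)
  show fD (h * Y * g) = fD Y
  unfold fD
  rw [key, m06, m07, m16, m17, h00, h01, h10, h11, d6, d7, z76]
  ring

end
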